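/- Fix n ≥ 2. On (ℂ²)^⊗n, consider the set 𝒞 of all unitaries of the form e^{iφ} · ∏_{k=1}^{m} U(π/4)_{i_k j_k}, where φ ∈ ℝ, m ∈ ℕ, and each (i_k, j_k) is a pair of distinct qubit indices (i.e. all global-phase multiples of finite products of √SWAP gates). Then the exchange gate exp(i(π/3)·SWAP₁₂) does NOT lie in the topological closure of 𝒞. In particular, circuits built solely from √SWAP gates cannot approximate arbitrary exchange gates even up to global phase, so XQP(π/4) is a strict subset of XQP. -/

import Mathlib

/-!
The condition `det M ^ 8 = M 0 0 ^ (8 * 2 ^ n)` is closed and homogeneous of degree `8 * 2 ^ n`,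
hence blind to global phases. It holds on every `√SWAP` circuit: each gate fixes `|0…0⟩` with
eigenvalue `e^{iπ/4}`, and its determinant is an eighth root of unity because its square
`i • SWAP` squares to a scalar. For `U(π/3)₁₂`, writing it as a two-qubit gate tensored with the
identity gives `det = e^{iπ 2^(n-1) / 3}`, while its `|0…0⟩` entry is `e^{iπ/3}`; the condition
would then force `3 ∣ 2 ^ (n + 1)`.
-/

open Matrix Complex

noncomputable section

/-- The SWAP of tensor factors `i` and `j` on `(ℂ²)^⊗n`. -/
def swapM (n : ℕ) (i j : Fin n) : Matrix (Fin n → Fin 2) (Fin n → Fin 2) ℂ :=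
  fun x y => if x = y ∘ Equiv.swap i j then 1 else 0

/-- The exchange gate `U(θ)_{ij} = exp(iθ·SWAP_{ij}) = cos θ·I + i sin θ·SWAP_{ij}`. -/
def exch (n : ℕ) (θ : ℝ) (i j : Fin n) : Matrix (Fin n → Fin 2) (Fin n → Fin 2) ℂ :=
  (Real.cos θ : ℂ) • (1 : Matrix (Fin n → Fin 2) (Fin n → Fin 2) ℂ)
    + (Complex.I * (Real.sin θ : ℂ)) • swapM n i j

/-- The set of all global-phase multiples of finite products of `√SWAP` gates on `n`
qubits. -/
def sqrtSwapCircuits (n : ℕ) : Set (Matrix (Fin n → Fin 2) (Fin n → Fin 2) ℂ) :=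
  {M | ∃ (φ : ℝ) (L : List (Fin n × Fin n)), (∀ p ∈ L, p.1 ≠ p.2) ∧
    M = Complex.exp (Complex.I * (φ : ℂ)) •
      (L.map fun p => exch n (Real.pi / 4) p.1 p.2).prod}

open scoped Kronecker

theorem Matrix.list_prod_mulVec_eq_pow_smul {ι R : Type*} [Fintype ι] [DecidableEq ι]
    [CommSemiring R] (L : List (Matrix ι ι R)) (v : ι → R) (μ : R)
    (h : ∀ A ∈ L, A *ᵥ v = μ • v) :
    L.prod *ᵥ v = μ ^ L.length • v := by
  induction L with
  | nil => simp
  | cons A L ih =>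
    rw [List.prod_cons, ← mulVec_mulVec, ih fun B hB => h B (List.mem_cons_of_mem A hB),
      mulVec_smul, h A List.mem_cons_self, smul_smul, List.length_cons, pow_succ]

theorem Matrix.apply_self_eq_of_mulVec_single_eq_smul {ι R : Type*} [Fintype ι] [DecidableEq ι]
    [Semiring R] {M : Matrix ι ι R} {v : ι} {μ : R}
    (h : M *ᵥ Pi.single v 1 = μ • Pi.single v 1) : M v v = μ := by
  simpa using congrFun h v

theorem Fin.append_eq_append_iff {k m : ℕ} {α : Type*} {a b : Fin k → α} {u v : Fin m → α} :
    Fin.append a u = Fin.append b v ↔ a = b ∧ u = v :=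
  ((Fin.appendEquiv k m).injective.eq_iff (a := (a, u)) (b := (b, v))).trans Prod.ext_iff

theorem Fin.append_comp_swap_castAdd {k m : ℕ} {α : Type*} (i j : Fin k) (a : Fin k → α)
    (u : Fin m → α) :
    Fin.append a u ∘ Equiv.swap (Fin.castAdd m i) (Fin.castAdd m j) =
      Fin.append (a ∘ Equiv.swap i j) u := by
  funext t
  refine Fin.addCases (fun s => ?_) (fun s => ?_) t
  · simp [(Fin.castAdd_injective k m).swap_apply]
  · have hne : ∀ r : Fin k, Fin.natAdd k s ≠ Fin.castAdd m r := fun r h => by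
      simp [Fin.ext_iff] at h; omega
    simp [Equiv.swap_apply_of_ne_of_ne (hne i) (hne j)]

theorem exp_pi_div_four_mul_I_pow_eight : exp ((Real.pi / 4 : ℝ) * I) ^ 8 = 1 := by
  convert (isPrimitiveRoot_exp 8 (by norm_num)).pow_eq_one using 3
  push_cast
  ring

theorem exp_pi_div_three_mul_I_pow_two_pow_ne_one (k : ℕ) :
    exp ((Real.pi / 3 : ℝ) * I) ^ 2 ^ k ≠ 1 := by
  have hω : IsPrimitiveRoot (exp ((Real.pi / 3 : ℝ) * I)) 6 := by
    convert isPrimitiveRoot_exp 6 (by norm_num) using 2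
    push_cast
    ring
  rw [Ne, hω.pow_eq_one_iff_dvd]
  intro h6
  have h3 : 3 ∣ 2 ^ k := (show 3 ∣ 6 by norm_num).trans h6
  exact absurd (Nat.prime_three.dvd_of_dvd_pow h3) (by norm_num)

section ExchangeGates

variable {n : ℕ}

theorem swapM_mul_self (i j : Fin n) : swapM n i j * swapM n i j = 1 := by
  ext x y
  simp [swapM, Matrix.mul_apply, Matrix.one_apply, Function.comp_def, Equiv.swap_apply_self]

theorem exch_mul_exch (θ φ : ℝ) (i j : Fin n) :
    exch n θ i j * exch n φ i j = exch n (θ + φ) i j := by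
  simp only [exch, add_mul, mul_add, smul_mul_smul_comm, one_mul, mul_one, swapM_mul_self,
    Real.cos_add, Real.sin_add]
  push_cast
  linear_combination (norm := module)
    I_mul_I • ((sin θ * sin φ : ℂ) • (1 : Matrix (Fin n → Fin 2) (Fin n → Fin 2) ℂ))

theorem exch_pi_div_two (i j : Fin n) : exch n (Real.pi / 2) i j = I • swapM n i j := by
  simp [exch]

theorem det_exch_pi_div_four_pow_eight (i j : Fin n) :
    (exch n (Real.pi / 4) i j).det ^ 8 = 1 := by
  have hsq : exch n (Real.pi / 4) i j * exch n (Real.pi / 4) i j = I • swapM n i j := by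
    rw [exch_mul_exch, ← exch_pi_div_two]
    ring_nf
  have hswap : (swapM n i j).det ^ 2 = 1 := by rw [sq, ← det_mul, swapM_mul_self, det_one]
  calc (exch n (Real.pi / 4) i j).det ^ 8
      = (exch n (Real.pi / 4) i j * exch n (Real.pi / 4) i j).det ^ 4 := by rw [det_mul]; ring
    _ = (I ^ 4) ^ 2 ^ n * ((swapM n i j).det ^ 2) ^ 2 := by
      rw [hsq, det_smul, Fintype.card_fun, Fintype.card_fin, Fintype.card_fin]; ring
    _ = 1 := by rw [I_pow_four, hswap]; simp

theorem swapM_mulVec_single_zero (i j : Fin n) :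
    swapM n i j *ᵥ Pi.single 0 1 = Pi.single 0 1 := by
  ext x
  simp [swapM, Pi.single_apply]

theorem exch_mulVec_single_zero (θ : ℝ) (i j : Fin n) :
    exch n θ i j *ᵥ Pi.single 0 1 = exp (θ * I) • Pi.single 0 1 := by
  rw [exch, add_mulVec, smul_mulVec, smul_mulVec, one_mulVec, swapM_mulVec_single_zero,
    ← add_smul, exp_mul_I, ofReal_cos, ofReal_sin, mul_comm I]

end ExchangeGates

theorem exch_castAdd_eq_submatrix_kronecker {k m : ℕ} (θ : ℝ) (i j : Fin k) :
    exch (k + m) θ (Fin.castAdd m i) (Fin.castAdd m j) =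
      (exch k θ i j ⊗ₖ (1 : Matrix (Fin m → Fin 2) (Fin m → Fin 2) ℂ)).submatrix
        (Fin.appendEquiv k m).symm (Fin.appendEquiv k m).symm := by
  ext x y
  obtain ⟨⟨a, u⟩, rfl⟩ : ∃ p : (Fin k → Fin 2) × (Fin m → Fin 2), Fin.append p.1 p.2 = x :=
    (Fin.appendEquiv k m).surjective x
  obtain ⟨⟨b, v⟩, rfl⟩ : ∃ p : (Fin k → Fin 2) × (Fin m → Fin 2), Fin.append p.1 p.2 = y :=
    (Fin.appendEquiv k m).surjective y
  by_cases huv : u = v <;>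
    simp [exch, swapM, one_apply, Fin.append_comp_swap_castAdd, Fin.append_eq_append_iff, huv]

theorem det_exch_castAdd {k m : ℕ} (θ : ℝ) (i j : Fin k) :
    (exch (k + m) θ (Fin.castAdd m i) (Fin.castAdd m j)).det = (exch k θ i j).det ^ 2 ^ m := by
  rw [exch_castAdd_eq_submatrix_kronecker, det_submatrix_equiv_self, det_kronecker, det_one,
    one_pow, mul_one, Fintype.card_fun, Fintype.card_fin, Fintype.card_fin]

theorem det_exch_two (θ : ℝ) : (exch 2 θ 0 1).det = exp (θ * I) ^ 2 := by
  rw [← det_submatrix_equiv_self finFunctionFinEquiv.symm]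
  have h4 : (exch 2 θ 0 1).submatrix finFunctionFinEquiv.symm finFunctionFinEquiv.symm =
      !![cos θ + I * sin θ, 0, 0, 0;
         0, cos θ, I * sin θ, 0;
         0, I * sin θ, cos θ, 0;
         0, 0, 0, cos θ + I * sin θ] := by
    ext x y
    fin_cases x <;> fin_cases y <;> simp +decide [exch, swapM]
  rw [h4, det_succ_row_zero]
  simp [Fin.sum_univ_succ, det_fin_three, exp_mul_I]
  linear_combination (cos θ + I * sin θ) ^ 2 * sin_sq_add_cos_sq (θ : ℂ)
    - (cos θ + I * sin θ) ^ 2 * sin θ ^ 2 * I_sq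

theorem det_pow_eight_eq_of_mem_sqrtSwapCircuits {n : ℕ}
    {M : Matrix (Fin n → Fin 2) (Fin n → Fin 2) ℂ} (hM : M ∈ sqrtSwapCircuits n) :
    M.det ^ 8 = M 0 0 ^ (8 * 2 ^ n) := by
  obtain ⟨φ, L, -, rfl⟩ := hM
  set P := (L.map fun p => exch n (Real.pi / 4) p.1 p.2).prod
  have hdet : P.det ^ 8 = 1 := by
    change ((powMonoidHom 8).comp detMonoidHom) P = 1
    rw [map_list_prod]
    refine List.prod_eq_one fun x hx => ?_
    simp only [List.mem_map] at hx
    obtain ⟨_, ⟨p, -, rfl⟩, rfl⟩ := hx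
    exact det_exch_pi_div_four_pow_eight p.1 p.2
  have hphase : P 0 0 ^ 8 = 1 := by
    have hentry : P 0 0 = exp ((Real.pi / 4 : ℝ) * I) ^ L.length := by
      refine apply_self_eq_of_mulVec_single_eq_smul ?_
      rw [← L.length_map (fun p => exch n (Real.pi / 4) p.1 p.2)]
      refine list_prod_mulVec_eq_pow_smul _ _ _ fun A hA => ?_
      obtain ⟨p, -, rfl⟩ := List.mem_map.mp hA
      exact exch_mulVec_single_zero _ _ _
    rw [hentry, pow_right_comm, exp_pi_div_four_mul_I_pow_eight, one_pow]
  rw [det_smul, Matrix.smul_apply, smul_eq_mul, mul_pow, mul_pow, hdet, pow_mul (P 0 0), hphase,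
    Fintype.card_fun, Fintype.card_fin, Fintype.card_fin]
  ring

/-- The exchange gate `U(π/3)₁₂ = exp(i(π/3)·SWAP₁₂)` is not in the closure of the set of
global-phase multiples of `√SWAP` circuits: `XQP(π/4) ⊊ XQP`. -/
theorem sqrtSwap_not_dense (n : ℕ) (hn : 2 ≤ n) :
    exch n (Real.pi / 3) ⟨0, by omega⟩ ⟨1, by omega⟩ ∉ closure (sqrtSwapCircuits n) := by
  obtain ⟨m, rfl⟩ : ∃ m, n = 2 + m := ⟨n - 2, by omega⟩
  intro hG
  have hclosed : IsClosed {M : Matrix (Fin (2 + m) → Fin 2) (Fin (2 + m) → Fin 2) ℂ |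
      M.det ^ 8 = M 0 0 ^ (8 * 2 ^ (2 + m))} :=
    isClosed_eq (by fun_prop) (by fun_prop)
  have hinv := closure_minimal (fun M hM => det_pow_eight_eq_of_mem_sqrtSwapCircuits hM)
    hclosed hG
  change (exch (2 + m) (Real.pi / 3) (Fin.castAdd m 0) (Fin.castAdd m 1)).det ^ 8 =
    exch (2 + m) (Real.pi / 3) (Fin.castAdd m 0) (Fin.castAdd m 1) 0 0 ^ (8 * 2 ^ (2 + m))
    at hinv
  rw [det_exch_castAdd, det_exch_two,
    apply_self_eq_of_mulVec_single_eq_smul (exch_mulVec_single_zero _ _ _)] at hinv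
  apply exp_pi_div_three_mul_I_pow_two_pow_ne_one (m + 4)
  set ω := exp ((Real.pi / 3 : ℝ) * I)
  refine mul_left_cancel₀ (pow_ne_zero (2 ^ (m + 4)) (exp_ne_zero _ : ω ≠ 0)) ?_
  calc ω ^ 2 ^ (m + 4) * ω ^ 2 ^ (m + 4) = ω ^ (8 * 2 ^ (2 + m)) := by ring
    _ = ((ω ^ 2) ^ 2 ^ m) ^ 8 := hinv.symm
    _ = ω ^ 2 ^ (m + 4) * 1 := by ring
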